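/- arXiv:1808.04171 — 3 statements merged into one kernel-verified Lean document; each statement's English description precedes it below -/
import Mathlib

section
/- Let α, β ≥ 0 with α + β < 1 and c > 0. Then sup_{t ≥ 0} ∫₀ᵗ (t-s)^{-α} (min(s,1))^{-β} e^{-c(t-s)} ds < ∞. -/
/-!
Writing `u = t - s`, we have `u ^ (-α) * (min s 1) ^ (-β) ≤ m ^ (-(α + β))` with
`m = min u (min s 1)`. According to which of `u`, `s`, `1` realises `m`, the integrand is then at
most `e ^ c * (K u + K s)` for `K x = (x ^ (-(α + β)) + 1) * e ^ (-c x)`; the factor `e ^ c`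
absorbs `e ^ (-c u) ≤ e ^ (c (1 - s))` when `s ≤ 1`. Since `α + β < 1`, `K` is integrable on
`(0, ∞)`, and reflecting `s ↦ t - s` bounds the integral by `2 e ^ c ∫₀^∞ K`,
uniformly in `t`.
-/

open MeasureTheory Real Set

theorem rpow_neg_mul_rpow_neg_le_min_rpow {u v α β : ℝ} (hu : 0 < u) (hv : 0 < v)
    (hα : 0 ≤ α) (hβ : 0 ≤ β) : u ^ (-α) * v ^ (-β) ≤ min u v ^ (-(α + β)) := by
  have hm : 0 < min u v := lt_min hu hv
  calc u ^ (-α) * v ^ (-β) ≤ min u v ^ (-α) * min u v ^ (-β) := by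
        apply mul_le_mul (rpow_le_rpow_of_nonpos hm (min_le_left u v) (neg_nonpos.2 hα))
          (rpow_le_rpow_of_nonpos hm (min_le_right u v) (neg_nonpos.2 hβ)) <;> positivity
    _ = min u v ^ (-(α + β)) := by rw [← rpow_add hm, neg_add]

theorem integral_Ioo_comp_sub_left {E : Type*} [NormedAddCommGroup E] [NormedSpace ℝ E]
    (f : ℝ → E) (t : ℝ) : ∫ s in Ioo 0 t, f (t - s) = ∫ s in Ioo 0 t, f s := by
  rcases le_total 0 t with ht | ht
  · rw [← integral_Ioc_eq_integral_Ioo, ← integral_Ioc_eq_integral_Ioo,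
      ← intervalIntegral.integral_of_le ht, ← intervalIntegral.integral_of_le ht,
      intervalIntegral.integral_comp_sub_left, sub_self, sub_zero]
  · simp [Ioo_eq_empty_of_le ht]

theorem MeasureTheory.IntegrableOn.comp_sub_left_Ioo {E : Type*} [NormedAddCommGroup E]
    {f : ℝ → E} {t : ℝ} (hf : IntegrableOn f (Ioo 0 t)) :
    IntegrableOn (fun s => f (t - s)) (Ioo 0 t) := by
  rcases le_total 0 t with ht | ht
  · rw [← intervalIntegrable_iff_integrableOn_Ioo_of_le ht] at hf ⊢
    simpa using (hf.comp_sub_left t).symm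
  · simp [Ioo_eq_empty_of_le ht]

noncomputable def powExpMajorant (γ c x : ℝ) : ℝ := (x ^ (-γ) + 1) * exp (-c * x)

theorem powExpMajorant_nonneg (γ c : ℝ) {x : ℝ} (hx : 0 ≤ x) : 0 ≤ powExpMajorant γ c x := by
  unfold powExpMajorant; positivity

theorem integrableOn_powExpMajorant {γ c : ℝ} (hγ : γ < 1) (hc : 0 < c) :
    IntegrableOn (powExpMajorant γ c) (Ioi 0) := by
  have hpow : IntegrableOn (fun x : ℝ => x ^ (-γ) * exp (-c * x)) (Ioi 0) := by
    simpa using integrableOn_rpow_mul_exp_neg_mul_rpow (p := 1) (by linarith) one_pos hc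
  refine (hpow.add (exp_neg_integrableOn_Ioi 0 hc)).congr_fun (fun x _ => ?_)
    measurableSet_Ioi
  simp only [powExpMajorant, Pi.add_apply]; ring

theorem min_rpow_neg_mul_exp_le {γ c u s : ℝ} (hc : 0 ≤ c) (hu : 0 < u)
    (hs : 0 < s) : min u (min s 1) ^ (-γ) * exp (-c * u) ≤
      exp c * (powExpMajorant γ c u + powExpMajorant γ c s) := by
  have hKu := powExpMajorant_nonneg γ c hu.le
  have hKs := powExpMajorant_nonneg γ c hs.le
  have hec : 1 ≤ exp c := one_le_exp hc
  have hKu_le :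
      powExpMajorant γ c u ≤ exp c * (powExpMajorant γ c u + powExpMajorant γ c s) := by
    nlinarith
  rcases min_choice u (min s 1) with hm | hm <;> rw [hm]
  · refine le_trans ?_ hKu_le
    unfold powExpMajorant; gcongr; linarith
  rcases min_choice s 1 with hm' | hm' <;> rw [hm']
  · have hs1 : s ≤ 1 := hm' ▸ min_le_right s 1
    calc s ^ (-γ) * exp (-c * u) ≤ exp c * (s ^ (-γ) * exp (-c * s)) := by
          rw [mul_left_comm, ← exp_add]
          gcongr; nlinarith
      _ ≤ exp c * (powExpMajorant γ c u + powExpMajorant γ c s) := by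
          gcongr
          refine le_add_of_nonneg_of_le hKu ?_
          unfold powExpMajorant; gcongr; linarith
  · refine le_trans ?_ hKu_le
    rw [one_rpow, one_mul]
    unfold powExpMajorant; nlinarith [rpow_nonneg hu.le (-γ), exp_pos (-c * u)]

theorem rpow_neg_mul_min_rpow_neg_mul_exp_le {α β c u s : ℝ} (hα : 0 ≤ α) (hβ : 0 ≤ β)
    (hc : 0 ≤ c) (hu : 0 < u) (hs : 0 < s) :
    u ^ (-α) * min s 1 ^ (-β) * exp (-c * u) ≤
      exp c * (powExpMajorant (α + β) c u + powExpMajorant (α + β) c s) :=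
  calc u ^ (-α) * min s 1 ^ (-β) * exp (-c * u)
      ≤ min u (min s 1) ^ (-(α + β)) * exp (-c * u) := by
        gcongr
        exact rpow_neg_mul_rpow_neg_le_min_rpow hu (lt_min hs one_pos) hα hβ
    _ ≤ exp c * (powExpMajorant (α + β) c u + powExpMajorant (α + β) c s) :=
        min_rpow_neg_mul_exp_le hc hu hs

/-- For `α, β ≥ 0` with `α + β < 1` and `c > 0`,
`sup_{t ≥ 0} ∫₀ᵗ (t-s)^{-α} (min(s,1))^{-β} exp(-c(t-s)) ds < ∞`. -/
theorem stmt1 (α β c : ℝ) (hα : 0 ≤ α) (hβ : 0 ≤ β) (hαβ : α + β < 1) (hc : 0 < c) :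
    ∃ M : ℝ, ∀ t : ℝ, 0 ≤ t →
      (∫ s in Set.Ioo (0 : ℝ) t,
        (t - s) ^ (-α) * (min s 1) ^ (-β) * Real.exp (-c * (t - s))) ≤ M := by
  set K := powExpMajorant (α + β) c
  have hK : IntegrableOn K (Ioi 0) := integrableOn_powExpMajorant hαβ hc
  refine ⟨2 * exp c * ∫ x in Ioi 0, K x, fun t _ => ?_⟩
  have hKt : IntegrableOn K (Ioo 0 t) := hK.mono_set Ioo_subset_Ioi_self
  calc (∫ s in Ioo 0 t, (t - s) ^ (-α) * (min s 1) ^ (-β) * exp (-c * (t - s)))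
      ≤ ∫ s in Ioo 0 t, exp c * (K (t - s) + K s) := by
        refine integral_mono_of_nonneg ?_ ((hKt.comp_sub_left_Ioo.add hKt).const_mul _) ?_
        all_goals filter_upwards [ae_restrict_mem measurableSet_Ioo] with s ⟨hs, hst⟩
        · have hts : 0 < t - s := sub_pos.2 hst
          positivity
        · exact rpow_neg_mul_min_rpow_neg_mul_exp_le hα hβ hc.le (sub_pos.2 hst) hs
    _ = 2 * exp c * ∫ s in Ioo 0 t, K s := by
        rw [integral_const_mul, integral_add hKt.comp_sub_left_Ioo hKt,
          integral_Ioo_comp_sub_left]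
        ring
    _ ≤ 2 * exp c * ∫ x in Ioi 0, K x := by
        refine mul_le_mul_of_nonneg_left
          (setIntegral_mono_set hK ?_ Ioo_subset_Ioi_self.eventuallyLE) (by positivity)
        exact (ae_restrict_mem measurableSet_Ioi).mono fun x hx => powExpMajorant_nonneg _ _ hx.le
end

section
/- Let (f_i)_{i≥1} be nonnegative random variables adapted to a filtration such that for some a₀ > 0, ε ∈ (0,1), and all i, ℙ(f_i ≤ e^{2a₀/ε} | F_{i-1}) ≤ e^{-3a₀/ε} almost surely. Let λ > 0 with 1/(2λ) = e^{-(2a₀ − b)/ε} for some 0 < b < a₀, and let (f̃_i)_{i≥1} be i.i.d. Exponential(1) random variables independent of (f_i). Then for ε sufficiently small, ℙ(λ Σ_{i≤N} f̃_i ≥ Σ_{i≤N} f_i for some N ≥ 1) ≤ e^{-2a₀/ε}/(1 − e^{-2a₀/ε}). -/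
open MeasureTheory ProbabilityTheory Real Set

/-!
Exponential Chebyshev with `t = 1/(2λ)`: on the event `Σ f_i ≤ λ Σ f̃_i` one has
`exp (Σ f̃_i / 2) * exp (-t Σ f_i) ≥ 1`, and the two factors are independent. The exponential
moment of `f̃_i` at `1/2` is `2`. Since `e^{-t f_i} ≤ e^{-tM} + 1{f_i ≤ M}` with `M = e^{2a₀/ε}`,
conditioning successively on `𝓕_{i-1}` gives `E[e^{-t Σ f_i}] ≤ (e^{-tM} + e^{-3a₀/ε})^N`,
where `tM = e^{b/ε}`. For small `ε`, `2 (e^{-e^{b/ε}} + e^{-3a₀/ε}) ≤ e^{-2a₀/ε}`, so the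
`N`-th event has probability at most `e^{-2a₀N/ε}`; a union bound over `N ≥ 1` finishes.
-/

lemma exp_neg_mul_le_add_indicator {Ω : Type*} {g : Ω → ℝ} {M t : ℝ} {ω : Ω}
    (hg : 0 ≤ g ω) (ht : 0 ≤ t) :
    exp (-(t * g ω)) ≤ exp (-(t * M)) + {ω' | g ω' ≤ M}.indicator (fun _ => 1) ω := by
  by_cases hgM : g ω ≤ M
  · rw [indicator_of_mem (s := {ω' | g ω' ≤ M}) hgM]
    have : exp (-(t * g ω)) ≤ 1 := exp_le_one_iff.2 (by nlinarith)
    linarith [exp_pos (-(t * M))]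
  · rw [indicator_of_notMem (s := {ω' | g ω' ≤ M}) hgM, add_zero]
    exact exp_le_exp.2 (by nlinarith)

lemma integral_mul_le_of_condExp_le {Ω : Type*} {m m₀ : MeasurableSpace Ω} {μ : Measure Ω}
    [IsFiniteMeasure μ] (hm : m ≤ m₀) {φ g : Ω → ℝ} {C p : ℝ}
    (hφ : StronglyMeasurable[m] φ) (hφ0 : ∀ ω, 0 ≤ φ ω) (hφC : ∀ ω, φ ω ≤ C)
    (hg : Integrable g μ) (hgp : ∀ᵐ ω ∂μ, μ[g | m] ω ≤ p) :
    ∫ ω, φ ω * g ω ∂μ ≤ p * ∫ ω, φ ω ∂μ := by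
  have hbound : ∀ᵐ ω ∂μ, ‖φ ω‖ ≤ C :=
    .of_forall fun ω => by rw [norm_of_nonneg (hφ0 ω)]; exact hφC ω
  have hφint : Integrable φ μ :=
    (integrable_const C).mono' (hφ.mono hm).aestronglyMeasurable hbound
  calc ∫ ω, φ ω * g ω ∂μ = ∫ ω, μ[φ * g | m] ω ∂μ := (integral_condExp hm).symm
    _ = ∫ ω, φ ω * μ[g | m] ω ∂μ :=
        integral_congr_ae (condExp_stronglyMeasurable_mul_of_bound hm hφ hg C hbound)
    _ ≤ ∫ ω, p * φ ω ∂μ := by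
        refine integral_mono_ae (integrable_condExp.bdd_mul (hφ.mono hm).aestronglyMeasurable
          hbound) (hφint.const_mul p) ?_
        filter_upwards [hgp] with ω hω
        rw [mul_comm p]
        exact mul_le_mul_of_nonneg_left hω (hφ0 ω)
    _ = p * ∫ ω, φ ω ∂μ := integral_const_mul p _

lemma integral_mul_exp_neg_le {Ω : Type*} {m m₀ : MeasurableSpace Ω} {μ : Measure Ω}
    [IsFiniteMeasure μ] (hm : m ≤ m₀) {φ g : Ω → ℝ} {M p t : ℝ}
    (hφ : StronglyMeasurable[m] φ) (hφ0 : ∀ ω, 0 ≤ φ ω) (hφ1 : ∀ ω, φ ω ≤ 1)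
    (hg : Measurable g) (hg0 : ∀ ω, 0 ≤ g ω) (ht : 0 ≤ t)
    (hsmall : ∀ᵐ ω ∂μ, μ[{ω' | g ω' ≤ M}.indicator (fun _ => (1 : ℝ)) | m] ω ≤ p) :
    ∫ ω, φ ω * exp (-(t * g ω)) ∂μ ≤ (exp (-(t * M)) + p) * ∫ ω, φ ω ∂μ := by
  set I := {ω' | g ω' ≤ M}.indicator (fun _ => (1 : ℝ))
  have hI : Integrable I μ := (integrable_const 1).indicator (measurableSet_le hg measurable_const)
  have hφm : AEStronglyMeasurable φ μ := (hφ.mono hm).aestronglyMeasurable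
  have hφbound : ∀ᵐ ω ∂μ, ‖φ ω‖ ≤ 1 :=
    .of_forall fun ω => by rw [norm_of_nonneg (hφ0 ω)]; exact hφ1 ω
  have hφint : Integrable φ μ := (integrable_const 1).mono' hφm hφbound
  calc ∫ ω, φ ω * exp (-(t * g ω)) ∂μ ≤ ∫ ω, φ ω * (exp (-(t * M)) + I ω) ∂μ := by
        refine integral_mono (hφint.mul_bdd (by fun_prop) (c := 1) (.of_forall fun ω => ?_))
          (((integrable_const _).add hI).bdd_mul hφm hφbound) fun ω =>
          mul_le_mul_of_nonneg_left (exp_neg_mul_le_add_indicator (hg0 ω) ht) (hφ0 ω)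
        rw [norm_of_nonneg (exp_pos _).le, exp_le_one_iff, neg_nonpos]
        exact mul_nonneg ht (hg0 ω)
    _ = exp (-(t * M)) * ∫ ω, φ ω ∂μ + ∫ ω, φ ω * I ω ∂μ := by
        simp_rw [mul_add]
        rw [integral_add (hφint.mul_const _) (hI.bdd_mul hφm hφbound), integral_mul_const,
          mul_comm]
    _ ≤ exp (-(t * M)) * ∫ ω, φ ω ∂μ + p * ∫ ω, φ ω ∂μ := by
        gcongr
        exact integral_mul_le_of_condExp_le hm hφ hφ0 hφ1 hI hsmall
    _ = (exp (-(t * M)) + p) * ∫ ω, φ ω ∂μ := by ring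

lemma lintegral_exp_neg_mul_sum_le_pow {Ω : Type*} {m₀ : MeasurableSpace Ω} {μ : Measure Ω}
    [IsProbabilityMeasure μ] {𝓕 : ℕ → MeasurableSpace Ω} {f : ℕ → Ω → ℝ} {M p t : ℝ}
    (hmono : Monotone 𝓕) (hle : ∀ i, 𝓕 i ≤ m₀) (hf : ∀ i, 1 ≤ i → Measurable[𝓕 i] (f i))
    (hf0 : ∀ i, 1 ≤ i → ∀ ω, 0 ≤ f i ω) (ht : 0 ≤ t) (hp : 0 ≤ p)
    (hsmall : ∀ i, 1 ≤ i → ∀ᵐ ω ∂μ,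
      μ[{ω' | f i ω' ≤ M}.indicator (fun _ => (1 : ℝ)) | 𝓕 (i - 1)] ω ≤ p) (N : ℕ) :
    ∫⁻ ω, ENNReal.ofReal (exp (-(t * ∑ i ∈ Finset.Icc 1 N, f i ω))) ∂μ
      ≤ ENNReal.ofReal ((exp (-(t * M)) + p) ^ N) := by
  set φ : ℕ → Ω → ℝ := fun n ω => exp (-(t * ∑ i ∈ Finset.Icc 1 n, f i ω))
  have hφ : ∀ n, Measurable[𝓕 n] (φ n) := fun n =>
    (Finset.measurable_sum _ fun i hi => (hf i (Finset.mem_Icc.1 hi).1).mono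
      (hmono (Finset.mem_Icc.1 hi).2) le_rfl).const_mul t |>.neg.exp
  have hφ1 : ∀ n ω, φ n ω ≤ 1 := fun n ω => exp_le_one_iff.2 <| neg_nonpos.2 <|
    mul_nonneg ht <| Finset.sum_nonneg fun i hi => hf0 i (Finset.mem_Icc.1 hi).1 ω
  have hφint : Integrable (φ N) μ :=
    (integrable_const 1).mono' ((hφ N).mono (hle N) le_rfl).aestronglyMeasurable
      (.of_forall fun ω => by rw [norm_of_nonneg (exp_pos _).le]; exact hφ1 N ω)
  have hstep : ∀ n, ∫ ω, φ (n + 1) ω ∂μ ≤ (exp (-(t * M)) + p) * ∫ ω, φ n ω ∂μ := fun n => by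
    have hsplit : ∀ ω, φ (n + 1) ω = φ n ω * exp (-(t * f (n + 1) ω)) := fun ω => by
      simp only [φ]
      rw [Finset.sum_Icc_succ_top (by omega), mul_add, neg_add, exp_add]
    simp_rw [hsplit]
    exact integral_mul_exp_neg_le (hle n) (hφ n).stronglyMeasurable (fun ω => (exp_pos _).le)
      (hφ1 n) ((hf _ n.succ_pos).mono (hle _) le_rfl) (hf0 _ n.succ_pos) ht
      (by simpa using hsmall (n + 1) n.succ_pos)
  have hbound : ∀ n, ∫ ω, φ n ω ∂μ ≤ (exp (-(t * M)) + p) ^ n := fun n => by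
    induction n with
    | zero => simp [φ]
    | succ n ih =>
      rw [pow_succ']
      exact (hstep n).trans (mul_le_mul_of_nonneg_left ih (by positivity))
  rw [← ofReal_integral_eq_lintegral_ofReal hφint (.of_forall fun ω => (exp_pos _).le)]
  exact ENNReal.ofReal_le_ofReal (hbound N)

lemma lintegral_exp_mul_expMeasure {r s : ℝ} (hr : 0 < r) (hsr : s < r) :
    ∫⁻ x, ENNReal.ofReal (exp (s * x)) ∂expMeasure r = ENNReal.ofReal (r / (r - s)) := by
  have hrs : 0 < r - s := by linarith
  have hint : IntegrableOn (fun x => r * exp (-(r - s) * x)) (Ioi 0) :=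
    (exp_neg_integrableOn_Ioi 0 hrs).const_mul r
  have hdens : ∀ x, exponentialPDF r x * ENNReal.ofReal (exp (s * x))
      = (Ici 0).indicator (fun x => ENNReal.ofReal (r * exp (-(r - s) * x))) x := by
    intro x
    rcases lt_or_ge x 0 with hx | hx
    · rw [exponentialPDF_of_neg hx, zero_mul, indicator_of_notMem (s := Ici 0) (not_le.2 hx)]
    · rw [exponentialPDF_of_nonneg hx, indicator_of_mem (s := Ici 0) (mem_Ici.2 hx),
        ← ENNReal.ofReal_mul (by positivity), mul_assoc, ← exp_add]
      ring_nf
  have hexp : expMeasure r = volume.withDensity (exponentialPDF r) := rfl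
  rw [hexp, lintegral_withDensity_eq_lintegral_mul _
      (show Measurable (exponentialPDF r) from (measurable_exponentialPDFReal r).ennreal_ofReal)
      (by fun_prop)]
  simp only [Pi.mul_apply, hdens]
  rw [lintegral_indicator measurableSet_Ici, Measure.restrict_congr_set Ioi_ae_eq_Ici.symm,
    ← ofReal_integral_eq_lintegral_ofReal hint (Filter.Eventually.of_forall fun x => by positivity),
    integral_const_mul, integral_exp_mul_Ioi (by linarith)]
  congr 1
  field_simp
  simp

lemma lintegral_exp_mul_sum_of_iIndepFun {Ω ι : Type*} [MeasurableSpace Ω] {μ : Measure Ω}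
    {X : ι → Ω → ℝ} {r s : ℝ} (hr : 0 < r) (hsr : s < r) (hX : ∀ i, Measurable (X i))
    (hind : iIndepFun X μ) (hlaw : ∀ i, μ.map (X i) = expMeasure r) (S : Finset ι) :
    ∫⁻ ω, ENNReal.ofReal (exp (s * ∑ i ∈ S, X i ω)) ∂μ = ENNReal.ofReal (r / (r - s)) ^ S.card := by
  have hg : Measurable fun x : ℝ => ENNReal.ofReal (exp (s * x)) := by fun_prop
  simp_rw [Finset.mul_sum, exp_sum, ENNReal.ofReal_prod_of_nonneg (fun _ _ => (exp_pos _).le)]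
  rw [lintegral_prod_eq_prod_lintegral_of_indepFun S (fun i ω => ENNReal.ofReal (exp (s * X i ω)))
    (hind.comp _ fun _ => hg) fun i => hg.comp (hX i), Finset.prod_eq_pow_card (b := ENNReal.ofReal (r / (r - s)))]
  intro i _
  rw [← lintegral_map hg (hX i), hlaw i, lintegral_exp_mul_expMeasure hr hsr]

lemma indepFun_sum_sum_of_indep_iSup {Ω : Type*} [MeasurableSpace Ω] {μ : Measure Ω}
    {f g : ℕ → Ω → ℝ}
    (h : Indep (⨆ i, MeasurableSpace.comap (f i) inferInstance)
      (⨆ i, MeasurableSpace.comap (g i) inferInstance) μ) (S T : Finset ℕ) :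
    IndepFun (fun ω => ∑ i ∈ S, f i ω) (fun ω => ∑ i ∈ T, g i ω) μ := by
  have hsum : ∀ (h : ℕ → Ω → ℝ) (S : Finset ℕ), MeasurableSpace.comap (fun ω => ∑ i ∈ S, h i ω)
      inferInstance ≤ ⨆ i, MeasurableSpace.comap (h i) inferInstance := fun h S =>
    (Finset.measurable_sum S fun i _ =>
      (comap_measurable (h i)).mono (le_iSup (fun i => MeasurableSpace.comap (h i) _) i) le_rfl
      ).comap_le
  rw [IndepFun_iff_Indep]
  exact indep_of_indep_of_le_right (indep_of_indep_of_le_left h (hsum f S)) (hsum g T)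

lemma measure_le_le_lintegral_mul_lintegral {Ω : Type*} [MeasurableSpace Ω] {μ : Measure Ω}
    {X Y : Ω → ℝ} {t : ℝ} (hX : Measurable X) (hY : Measurable Y) (hXY : IndepFun X Y μ)
    (ht : 0 ≤ t) :
    μ {ω | X ω ≤ Y ω} ≤ (∫⁻ ω, ENNReal.ofReal (exp (-(t * X ω))) ∂μ)
      * ∫⁻ ω, ENNReal.ofReal (exp (t * Y ω)) ∂μ := by
  have hF : Measurable fun x : ℝ => ENNReal.ofReal (exp (-(t * x))) := by fun_prop
  have hG : Measurable fun y : ℝ => ENNReal.ofReal (exp (t * y)) := by fun_prop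
  have hsub : {ω | X ω ≤ Y ω} ⊆ {ω | 1 ≤ ENNReal.ofReal (exp (-(t * X ω)))
      * ENNReal.ofReal (exp (t * Y ω))} := fun ω (hω : X ω ≤ Y ω) => by
    rw [mem_ofPred_eq, ← ENNReal.ofReal_mul (exp_pos _).le, ← exp_add, ENNReal.one_le_ofReal,
      one_le_exp_iff]
    nlinarith
  calc μ {ω | X ω ≤ Y ω} ≤ _ := measure_mono hsub
    _ ≤ ∫⁻ ω, ENNReal.ofReal (exp (-(t * X ω))) * ENNReal.ofReal (exp (t * Y ω)) ∂μ := by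
        simpa using mul_meas_ge_le_lintegral₀ ((hF.comp hX).mul (hG.comp hY)).aemeasurable 1
    _ = _ := lintegral_mul_eq_lintegral_mul_lintegral_of_indepFun (hF.comp hX) (hG.comp hY)
        (hXY.comp hF hG)

lemma measure_exists_le_of_le_geometric {Ω : Type*} [MeasurableSpace Ω] {μ : Measure Ω}
    {A : ℕ → Set Ω} {q : ℝ} (hq0 : 0 ≤ q) (hq1 : q < 1)
    (hA : ∀ N, 1 ≤ N → μ (A N) ≤ ENNReal.ofReal q ^ N) :
    μ {ω | ∃ N, 1 ≤ N ∧ ω ∈ A N} ≤ ENNReal.ofReal (q / (1 - q)) := by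
  have hsub : {ω | ∃ N, 1 ≤ N ∧ ω ∈ A N} ⊆ ⋃ n, A (n + 1) := by
    rintro ω ⟨N, hN, hω⟩
    exact mem_iUnion.2 ⟨N - 1, by rwa [Nat.sub_add_cancel hN]⟩
  calc μ {ω | ∃ N, 1 ≤ N ∧ ω ∈ A N}
      ≤ ∑' n, μ (A (n + 1)) := (measure_mono hsub).trans (measure_iUnion_le _)
    _ ≤ ∑' n, ENNReal.ofReal q ^ n * ENNReal.ofReal q :=
        ENNReal.tsum_le_tsum fun n => (hA (n + 1) n.succ_pos).trans_eq (pow_succ _ _)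
    _ = ENNReal.ofReal (q / (1 - q)) := by
        rw [ENNReal.tsum_mul_right, ENNReal.tsum_geometric, ENNReal.ofReal_div_of_pos (by linarith),
          ENNReal.ofReal_sub 1 hq0, ENNReal.ofReal_one, div_eq_mul_inv, mul_comm]

lemma two_mul_add_le_exp_neg {a₀ b ε : ℝ} (ha : 0 < a₀) (hb : 0 < b) (hε : 0 < ε) (hεa : ε ≤ a₀ / 2)
    (hεb : ε ≤ b ^ 2 / (8 * a₀)) :
    2 * (exp (-exp (b / ε)) + exp (-(3 * a₀) / ε)) ≤ exp (-(2 * a₀) / ε) := by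
  have hexp2 : exp (-2) ≤ 1 / 4 := by
    rw [exp_neg, inv_le_comm₀ (exp_pos _) (by norm_num)]
    linarith [quadratic_le_exp_of_nonneg (zero_le_two (α := ℝ))]
  have ha2 : 2 ≤ a₀ / ε := (le_div_iff₀ hε).2 (by linarith)
  have hb8 : 8 * a₀ * ε ≤ b ^ 2 := by rwa [le_div_iff₀ (by positivity), mul_comm] at hεb
  have hbig : 2 * a₀ / ε + 2 ≤ exp (b / ε) := by
    have hsq : 4 * (a₀ / ε) ≤ (b / ε) ^ 2 / 2 := by
      rw [div_pow, le_div_iff₀ two_pos, le_div_iff₀ (by positivity)]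
      field_simp
      nlinarith
    have := quadratic_le_exp_of_nonneg (x := b / ε) (by positivity)
    have : 2 * a₀ / ε = 2 * (a₀ / ε) := by ring
    linarith [div_pos hb hε]
  have h3 : exp (-(3 * a₀) / ε) ≤ exp (-(2 * a₀) / ε) * exp (-2) := by
    rw [← exp_add]; apply exp_le_exp.2
    have : -(3 * a₀) / ε = -(2 * a₀) / ε - a₀ / ε := by ring
    linarith
  have hb' : exp (-exp (b / ε)) ≤ exp (-(2 * a₀) / ε) * exp (-2) := by
    rw [← exp_add]; apply exp_le_exp.2
    have : -(2 * a₀) / ε = -(2 * a₀ / ε) := by ring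
    linarith
  nlinarith [exp_pos (-(2 * a₀) / ε)]

theorem stmt10_general (a₀ b : ℝ) (ha : 0 < a₀) (hb0 : 0 < b) :
    ∃ ε₀ : ℝ, 0 < ε₀ ∧ ε₀ < 1 ∧ ∀ ε : ℝ, 0 < ε → ε ≤ ε₀ →
      ∀ (Ω : Type) [MeasurableSpace Ω] (μ : Measure Ω) [IsProbabilityMeasure μ]
        (𝓕 : ℕ → MeasurableSpace Ω) (f ftil : ℕ → Ω → ℝ) (l : ℝ),
        Monotone 𝓕 → (∀ i, 𝓕 i ≤ ‹MeasurableSpace Ω›) →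
        (∀ i, 1 ≤ i → Measurable[𝓕 i] (f i)) →
        (∀ i, 1 ≤ i → ∀ ω, 0 ≤ f i ω) →
        (∀ i, 1 ≤ i → ∀ᵐ ω ∂μ,
          (μ[Set.indicator {ω' | f i ω' ≤ Real.exp (2 * a₀ / ε)}
              (fun _ => (1 : ℝ)) | 𝓕 (i - 1)]) ω ≤ Real.exp (-(3 * a₀) / ε)) →
        (∀ i, Measurable (ftil i)) →
        iIndepFun ftil μ →
        (∀ i, Measure.map (ftil i) μ = expMeasure 1) →
        Indep (⨆ i, MeasurableSpace.comap (f i) inferInstance)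
          (⨆ i, MeasurableSpace.comap (ftil i) inferInstance) μ →
        0 < l → 1 / (2 * l) = Real.exp (-((2 * a₀ - b) / ε)) →
        μ {ω | ∃ N : ℕ, 1 ≤ N ∧
            ∑ i ∈ Finset.Icc 1 N, f i ω ≤ l * ∑ i ∈ Finset.Icc 1 N, ftil i ω}
          ≤ ENNReal.ofReal
              (Real.exp (-(2 * a₀) / ε) / (1 - Real.exp (-(2 * a₀) / ε))) := by
  refine ⟨min (1 / 2) (min (a₀ / 2) (b ^ 2 / (8 * a₀))), by positivity,
    (min_le_left _ _).trans_lt (by norm_num), ?_⟩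
  intro ε hε hεε₀ Ω _ μ _ 𝓕 f ftil l hmono hle hf hf0 hsmall hftil hiid hlaw hindep hl hlt
  set t := exp (-((2 * a₀ - b) / ε))
  have htl : t * l = 1 / 2 := by rw [← hlt]; field_simp
  have htM : t * exp (2 * a₀ / ε) = exp (b / ε) := by rw [← exp_add]; congr 1; field_simp; ring
  have hq : 2 * (exp (-(t * exp (2 * a₀ / ε))) + exp (-(3 * a₀) / ε)) ≤ exp (-(2 * a₀) / ε) :=
    htM ▸ two_mul_add_le_exp_neg ha hb0 hε
      (hεε₀.trans ((min_le_right _ _).trans (min_le_left _ _)))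
      (hεε₀.trans ((min_le_right _ _).trans (min_le_right _ _)))
  refine measure_exists_le_of_le_geometric (A := fun N => {ω | _ ≤ l * _}) (exp_pos _).le
    (exp_lt_one_iff.2 (by rw [neg_div]; exact neg_neg_of_pos (by positivity))) fun N _ => ?_
  have hfm : ∀ i, 1 ≤ i → Measurable (f i) := fun i hi => (hf i hi).mono (hle i) le_rfl
  calc μ {ω | ∑ i ∈ Finset.Icc 1 N, f i ω ≤ l * ∑ i ∈ Finset.Icc 1 N, ftil i ω}
      ≤ (∫⁻ ω, ENNReal.ofReal (exp (-(t * ∑ i ∈ Finset.Icc 1 N, f i ω))) ∂μ)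
        * ∫⁻ ω, ENNReal.ofReal (exp (t * (l * ∑ i ∈ Finset.Icc 1 N, ftil i ω))) ∂μ :=
        measure_le_le_lintegral_mul_lintegral
          (Finset.measurable_sum _ fun i hi => hfm i (Finset.mem_Icc.1 hi).1)
          ((Finset.measurable_sum _ fun i _ => hftil i).const_mul l)
          ((indepFun_sum_sum_of_indep_iSup hindep (Finset.Icc 1 N) (Finset.Icc 1 N)).comp
            measurable_id (measurable_const_mul l))
          (exp_pos _).le
    _ ≤ ENNReal.ofReal ((exp (-(t * exp (2 * a₀ / ε))) + exp (-(3 * a₀) / ε)) ^ N)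
        * ENNReal.ofReal 2 ^ N := by
        gcongr
        · exact lintegral_exp_neg_mul_sum_le_pow hmono hle hf hf0 (exp_pos _).le (exp_pos _).le
            hsmall N
        · simp_rw [← mul_assoc, htl]
          rw [lintegral_exp_mul_sum_of_iIndepFun one_pos (by norm_num) hftil hiid hlaw]
          norm_num
    _ ≤ ENNReal.ofReal (exp (-(2 * a₀) / ε)) ^ N := by
        rw [← ENNReal.ofReal_pow zero_le_two, ← ENNReal.ofReal_mul (by positivity), ← mul_pow,
          ← ENNReal.ofReal_pow (exp_pos _).le, mul_comm]
        exact ENNReal.ofReal_le_ofReal (pow_le_pow_left₀ (by positivity) hq N)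

/-- Comparison of a random walk with conditionally very large increments against an
independent exponential random walk: if `ℙ(f_i ≤ e^{2a₀/ε} | 𝓕_{i-1}) ≤ e^{-3a₀/ε}`
a.s. for all `i ≥ 1`, `(f̃_i)` are i.i.d. `Exponential(1)` independent of the `f_i`,
and `1/(2λ) = e^{-(2a₀-b)/ε}` with `0 < b < a₀`, then for all sufficiently small
`ε` the probability that `λ Σ_{i≤N} f̃_i ≥ Σ_{i≤N} f_i` for some `N ≥ 1` is at most
`e^{-2a₀/ε}/(1 - e^{-2a₀/ε})`. -/
theorem stmt10 (a₀ b : ℝ) (ha : 0 < a₀) (hb0 : 0 < b) (hba : b < a₀) :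
    ∃ ε₀ : ℝ, 0 < ε₀ ∧ ε₀ < 1 ∧ ∀ ε : ℝ, 0 < ε → ε ≤ ε₀ →
      ∀ (Ω : Type) [MeasurableSpace Ω] (μ : Measure Ω) [IsProbabilityMeasure μ]
        (𝓕 : ℕ → MeasurableSpace Ω) (f ftil : ℕ → Ω → ℝ) (l : ℝ),
        Monotone 𝓕 → (∀ i, 𝓕 i ≤ ‹MeasurableSpace Ω›) →
        (∀ i, 1 ≤ i → Measurable[𝓕 i] (f i)) →
        (∀ i, 1 ≤ i → ∀ ω, 0 ≤ f i ω) →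
        (∀ i, 1 ≤ i → ∀ᵐ ω ∂μ,
          (μ[Set.indicator {ω' | f i ω' ≤ Real.exp (2 * a₀ / ε)}
              (fun _ => (1 : ℝ)) | 𝓕 (i - 1)]) ω ≤ Real.exp (-(3 * a₀) / ε)) →
        (∀ i, Measurable (ftil i)) →
        iIndepFun ftil μ →
        (∀ i, Measure.map (ftil i) μ = expMeasure 1) →
        Indep (⨆ i, MeasurableSpace.comap (f i) inferInstance)
          (⨆ i, MeasurableSpace.comap (ftil i) inferInstance) μ →
        0 < l → 1 / (2 * l) = Real.exp (-((2 * a₀ - b) / ε)) →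
        μ {ω | ∃ N : ℕ, 1 ≤ N ∧
            ∑ i ∈ Finset.Icc 1 N, f i ω ≤ l * ∑ i ∈ Finset.Icc 1 N, ftil i ω}
          ≤ ENNReal.ofReal
              (Real.exp (-(2 * a₀) / ε) / (1 - Real.exp (-(2 * a₀) / ε))) :=
  stmt10_general a₀ b ha hb0
end

section
/- Let Y : [0,∞) → ℝ≥0 be continuous and suppose that there are constants C ≥ 1, κ ∈ (0,2), and sequences of times 0 = ρ₀ ≤ ν₁ ≤ ρ₁ ≤ ν₂ ≤ ... with ν_i → ∞, such that for each i ≥ 1: (a) Y(t) ≤ C e^{-(2-κ/2)(t - ρ_{i-1})} Y(ρ_{i-1}) for all t ∈ [ρ_{i-1}, ν_i], and (b) Y(t) ≤ C e^{ℓ_i (t - ν_i)} Y(ν_i) for all t ∈ [ν_i, ρ_i] with some ℓ_i ≥ 0. If additionally Σ_{j≤i} [(κ/2)(ν_j − ρ_{j-1}) − ℓ_j(ρ_j − ν_j) − (2-κ)(ρ_j − ν_j) − 2 log C] ≥ 0 for every i ≥ 1, then Y(ρ_i) ≤ e^{-(2-κ)ρ_i} Y(0) for every i ≥ 1, and moreover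 Y(ν_i) ≤ C e^{-(2-κ)ν_i} e^{-(κ/2)(ν_i - ρ_{i-1})} e^{-S_{i-1}} Y(0) where S_{i-1} is the partial sum in the displayed condition up to index i−1. -/
/-!
Each good interval `[ρₙ, νₙ₊₁]` gains a factor `C e^{-(γ+ε)(νₙ₊₁-ρₙ)}` and the following bad interval
`[νₙ₊₁, ρₙ₊₁]` a factor `C e^{ℓₙ₊₁(ρₙ₊₁-νₙ₊₁)}`. Chaining these bounds, the exponent at `ρₙ` is
`-γ(ρₙ - ρ₀)` minus the partial sum of the increments `ε(νⱼ₊₁-ρⱼ) - (ℓⱼ₊₁+γ)(ρⱼ₊₁-νⱼ₊₁) - 2 log C`,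
so nonnegative partial sums leave the net decay rate `γ = 2 - κ` (with `ε = κ/2`).
-/

open Real Finset

namespace ExpContraction

noncomputable def gluingIncrement (γ ε C : ℝ) (ρ ν ℓ : ℕ → ℝ) (j : ℕ) : ℝ :=
  ε * (ν (j + 1) - ρ j) - ℓ (j + 1) * (ρ (j + 1) - ν (j + 1))
    - γ * (ρ (j + 1) - ν (j + 1)) - 2 * log C

lemma le_exp_add_log_mul_of_le {C p r x y w : ℝ} (hC : 0 < C)
    (hy : y ≤ C * exp p * x) (hx : x ≤ exp r * w) : y ≤ exp (p + r + log C) * w :=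
  calc y ≤ C * exp p * (exp r * w) := hy.trans (by gcongr)
    _ = exp (p + r + log C) * w := by rw [exp_add, exp_add, exp_log hC]; ring

variable {Y : ℝ → ℝ} {γ ε C : ℝ} {ρ ν ℓ : ℕ → ℝ}

lemma le_exp_at_rho (hC : 0 < C)
    (hgood : ∀ n, Y (ν (n + 1)) ≤ C * exp (-(γ + ε) * (ν (n + 1) - ρ n)) * Y (ρ n))
    (hbad : ∀ n, Y (ρ (n + 1)) ≤ C * exp (ℓ (n + 1) * (ρ (n + 1) - ν (n + 1))) * Y (ν (n + 1)))
    (n : ℕ) :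
    Y (ρ n) ≤ exp (-γ * (ρ n - ρ 0) - ∑ j ∈ range n, gluingIncrement γ ε C ρ ν ℓ j) * Y (ρ 0) := by
  induction n with
  | zero => simp
  | succ n ih =>
    have hν := le_exp_add_log_mul_of_le hC (hgood n) ih
    convert le_exp_add_log_mul_of_le hC (hbad n) hν using 3
    rw [sum_range_succ, gluingIncrement]
    ring

lemma le_exp_at_nu (hC : 0 < C)
    (hgood : ∀ n, Y (ν (n + 1)) ≤ C * exp (-(γ + ε) * (ν (n + 1) - ρ n)) * Y (ρ n))
    (hbad : ∀ n, Y (ρ (n + 1)) ≤ C * exp (ℓ (n + 1) * (ρ (n + 1) - ν (n + 1))) * Y (ν (n + 1)))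
    (n : ℕ) :
    Y (ν (n + 1)) ≤ C * exp (-γ * (ν (n + 1) - ρ 0)) * exp (-ε * (ν (n + 1) - ρ n)) *
      exp (-∑ j ∈ range n, gluingIncrement γ ε C ρ ν ℓ j) * Y (ρ 0) := by
  refine (hgood n).trans ?_
  calc C * exp (-(γ + ε) * (ν (n + 1) - ρ n)) * Y (ρ n)
      ≤ C * exp (-(γ + ε) * (ν (n + 1) - ρ n)) *
          (exp (-γ * (ρ n - ρ 0) - ∑ j ∈ range n, gluingIncrement γ ε C ρ ν ℓ j) * Y (ρ 0)) := by
        gcongr; exact le_exp_at_rho hC hgood hbad n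
    _ = _ := by
        rw [← mul_assoc, mul_assoc C, ← exp_add, show -(γ + ε) * (ν (n + 1) - ρ n) +
            (-γ * (ρ n - ρ 0) - ∑ j ∈ range n, gluingIncrement γ ε C ρ ν ℓ j) =
            -γ * (ν (n + 1) - ρ 0) + -ε * (ν (n + 1) - ρ n) +
            -∑ j ∈ range n, gluingIncrement γ ε C ρ ν ℓ j by ring, exp_add, exp_add]
        ring

end ExpContraction

open ExpContraction in
theorem stmt18_general (Y : ℝ → ℝ) (hYpos : ∀ t, 0 ≤ t → 0 ≤ Y t)
    (C κ : ℝ) (hC : 1 ≤ C)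
    (ρ ν : ℕ → ℝ) (ℓ : ℕ → ℝ)
    (hρ0 : ρ 0 = 0)
    (horder : ∀ i : ℕ, 1 ≤ i → ρ (i - 1) ≤ ν i ∧ ν i ≤ ρ i)
    (hgood : ∀ i : ℕ, 1 ≤ i → ∀ t ∈ Set.Icc (ρ (i - 1)) (ν i),
      Y t ≤ C * Real.exp (-(2 - κ / 2) * (t - ρ (i - 1))) * Y (ρ (i - 1)))
    (hbad : ∀ i : ℕ, 1 ≤ i → ∀ t ∈ Set.Icc (ν i) (ρ i),
      Y t ≤ C * Real.exp (ℓ i * (t - ν i)) * Y (ν i))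
    (S : ℕ → ℝ)
    (hS : ∀ i : ℕ, S i = ∑ j ∈ Finset.range i,
      ((κ / 2) * (ν (j + 1) - ρ j) - ℓ (j + 1) * (ρ (j + 1) - ν (j + 1))
        - (2 - κ) * (ρ (j + 1) - ν (j + 1)) - 2 * Real.log C))
    (hSpos : ∀ i : ℕ, 1 ≤ i → 0 ≤ S i) :
    ∀ i : ℕ, 1 ≤ i →
      Y (ρ i) ≤ Real.exp (-(2 - κ) * ρ i) * Y 0 ∧
      Y (ν i) ≤ C * Real.exp (-(2 - κ) * ν i) *
        Real.exp (-(κ / 2) * (ν i - ρ (i - 1))) * Real.exp (-(S (i - 1))) * Y 0 := by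
  have hC0 : 0 < C := one_pos.trans_le hC
  have horder' (n : ℕ) : ρ n ≤ ν (n + 1) ∧ ν (n + 1) ≤ ρ (n + 1) := horder (n + 1) n.succ_pos
  have hgood' (n : ℕ) :
      Y (ν (n + 1)) ≤ C * exp (-((2 - κ) + κ / 2) * (ν (n + 1) - ρ n)) * Y (ρ n) := by
    rw [show (2 - κ) + κ / 2 = 2 - κ / 2 by ring]
    exact hgood (n + 1) n.succ_pos _ ⟨(horder' n).1, le_rfl⟩
  have hbad' (n : ℕ) : Y (ρ (n + 1)) ≤
      C * exp (ℓ (n + 1) * (ρ (n + 1) - ν (n + 1))) * Y (ν (n + 1)) :=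
    hbad (n + 1) n.succ_pos _ ⟨(horder' n).2, le_rfl⟩
  have hS' (n : ℕ) : S n = ∑ j ∈ range n, gluingIncrement (2 - κ) (κ / 2) C ρ ν ℓ j := hS n
  rintro i hi
  obtain ⟨n, rfl⟩ : ∃ n, i = n + 1 := ⟨i - 1, by omega⟩
  refine ⟨(le_exp_at_rho hC0 hgood' hbad' (n + 1)).trans ?_, ?_⟩
  · rw [hρ0, sub_zero, ← hS']
    gcongr
    · exact hYpos 0 le_rfl
    · linarith [hSpos (n + 1) n.succ_pos]
  · simpa only [hρ0, sub_zero, Nat.add_sub_cancel, ← hS'] using le_exp_at_nu hC0 hgood' hbad' n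

/-- Deterministic gluing argument: alternating "good" intervals `[ρ_{i-1}, ν_i]`
with exponential contraction at rate `2 - κ/2` and "bad" intervals `[ν_i, ρ_i]`
with exponential growth at rate `ℓ_i`.  If the random-walk-type partial sums
`S_i = Σ_{j ≤ i} [(κ/2)(ν_j − ρ_{j-1}) − ℓ_j (ρ_j − ν_j) − (2-κ)(ρ_j − ν_j) − 2 log C]`
are nonnegative for every `i ≥ 1`, then `Y(ρ_i) ≤ e^{-(2-κ) ρ_i} Y(0)` and
`Y(ν_i) ≤ C e^{-(2-κ) ν_i} e^{-(κ/2)(ν_i − ρ_{i-1})} e^{-S_{i-1}} Y(0)` for every `i ≥ 1`. -/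
theorem stmt18 (Y : ℝ → ℝ) (hYc : Continuous Y) (hYpos : ∀ t, 0 ≤ t → 0 ≤ Y t)
    (C κ : ℝ) (hC : 1 ≤ C) (hκ0 : 0 < κ) (hκ2 : κ < 2)
    (ρ ν : ℕ → ℝ) (ℓ : ℕ → ℝ) (hℓ : ∀ i, 0 ≤ ℓ i)
    (hρ0 : ρ 0 = 0)
    (horder : ∀ i : ℕ, 1 ≤ i → ρ (i - 1) ≤ ν i ∧ ν i ≤ ρ i)
    (hνtop : Filter.Tendsto ν Filter.atTop Filter.atTop)
    (hgood : ∀ i : ℕ, 1 ≤ i → ∀ t ∈ Set.Icc (ρ (i - 1)) (ν i),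
      Y t ≤ C * Real.exp (-(2 - κ / 2) * (t - ρ (i - 1))) * Y (ρ (i - 1)))
    (hbad : ∀ i : ℕ, 1 ≤ i → ∀ t ∈ Set.Icc (ν i) (ρ i),
      Y t ≤ C * Real.exp (ℓ i * (t - ν i)) * Y (ν i))
    (S : ℕ → ℝ)
    (hS : ∀ i : ℕ, S i = ∑ j ∈ Finset.range i,
      ((κ / 2) * (ν (j + 1) - ρ j) - ℓ (j + 1) * (ρ (j + 1) - ν (j + 1))
        - (2 - κ) * (ρ (j + 1) - ν (j + 1)) - 2 * Real.log C))
    (hSpos : ∀ i : ℕ, 1 ≤ i → 0 ≤ S i) :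
    ∀ i : ℕ, 1 ≤ i →
      Y (ρ i) ≤ Real.exp (-(2 - κ) * ρ i) * Y 0 ∧
      Y (ν i) ≤ C * Real.exp (-(2 - κ) * ν i) *
        Real.exp (-(κ / 2) * (ν i - ρ (i - 1))) * Real.exp (-(S (i - 1))) * Y 0 :=
  stmt18_general Y hYpos C κ hC ρ ν ℓ hρ0 horder hgood hbad S hS hSpos
end
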